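/- arXiv:2008.12235 — 7 statements merged into one kernel-verified Lean document; each statement's English description precedes it below -/
import Mathlib

section
/- In the facility-choice game with zero facility costs, any assignment ŝ minimizing the exact potential Φ̃ is a Nash equilibrium, and its social cost satisfies c(ŝ) ≤ 2·c(s*) where s* minimizes social cost. Hence the Price of Stability is at most 2. -/
open Finset
open scoped Classical

variable {A F : Type*}

/-- Agents `i` and `j` are connected in assignment `s` if they use a common facility.
(Two agents both at `none` are *not* connected, per the paper's convention.) -/
def conn (s : A → Option F) (i j : A) : Prop :=
  ∃ f, s i = some f ∧ s j = some f

/-- Agent `i`'s cost without facility prices: connection cost plus disconnection costs. -/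
noncomputable def ct [Fintype A] (cc : A → Option F → ℝ) (dc : A → A → ℝ)
    (s : A → Option F) (i : A) : ℝ :=
  cc i (s i) + ∑ j ∈ Finset.univ.filter (fun j => j ≠ i ∧ ¬ conn s i j), dc i j

/-- The potential function Φ̃: total connection cost plus disconnection cost of each
unordered disconnected pair counted once (hence the factor 1/2 on the double sum). -/
noncomputable def Phi0 [Fintype A] (cc : A → Option F → ℝ) (dc : A → A → ℝ)
    (s : A → Option F) : ℝ :=
  (∑ i, cc i (s i))
    + (1 / 2) * ∑ i, ∑ j ∈ Finset.univ.filter (fun j => j ≠ i ∧ ¬ conn s i j), dc i j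

/-- Social cost with zero facility costs: each disconnected pair is counted twice. -/
noncomputable def soc [Fintype A] (cc : A → Option F → ℝ) (dc : A → A → ℝ)
    (s : A → Option F) : ℝ :=
  (∑ i, cc i (s i))
    + ∑ i, ∑ j ∈ Finset.univ.filter (fun j => j ≠ i ∧ ¬ conn s i j), dc i j

/-!
`Φ̃` is an exact potential of the game, so a minimizer of `Φ̃` admits no improving unilateral
deviation. Since all costs are nonnegative, `Φ̃ ≤ c ≤ 2 Φ̃`, whence
`c(ŝ) ≤ 2 Φ̃(ŝ) ≤ 2 Φ̃(s) ≤ 2 c(s)` for every assignment `s`.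
-/

lemma conn_comm {s : A → Option F} {i j : A} : conn s i j ↔ conn s j i := by
  unfold conn
  tauto

lemma sum_sum_eq_two_nsmul_sum_row {M : Type*} [AddCommMonoid M] [Fintype A] [DecidableEq A]
    (d : A → A → M) (hd : ∀ j k, d j k = d k j) (i : A) (hii : d i i = 0)
    (hzero : ∀ j k, j ≠ i → k ≠ i → d j k = 0) :
    ∑ j, ∑ k, d j k = 2 • ∑ k, d i k := by
  have hsplit : ∀ j k, d j k = (if j = i then d i k else 0) + (if k = i then d j i else 0) := by
    intro j k
    by_cases hj : j = i <;> by_cases hk : k = i <;> simp_all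
  calc ∑ j, ∑ k, d j k
      = ∑ j, ∑ k, ((if j = i then d i k else 0) + (if k = i then d j i else 0)) :=
        Finset.sum_congr rfl fun j _ => Finset.sum_congr rfl fun k _ => hsplit j k
    _ = ∑ k, d i k + ∑ j, d j i := by simp [Finset.sum_add_distrib]
    _ = 2 • ∑ k, d i k := by simp [two_nsmul, hd _ i]

noncomputable def discCost (dc : A → A → ℝ) (s : A → Option F) (j k : A) : ℝ :=
  if k ≠ j ∧ ¬ conn s j k then dc j k else 0

section discCost

variable (dc : A → A → ℝ) (s : A → Option F)

lemma discCost_comm (hsym : ∀ i j, dc i j = dc j i) (j k : A) :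
    discCost dc s j k = discCost dc s k j := by
  simp only [discCost, ne_comm (a := k), conn_comm (j := k), hsym j k]

lemma discCost_self (j : A) : discCost dc s j j = 0 := by
  simp [discCost]

lemma discCost_update_of_ne [DecidableEq A] (i : A) (x : Option F) {j k : A}
    (hj : j ≠ i) (hk : k ≠ i) : discCost dc (Function.update s i x) j k = discCost dc s j k := by
  simp [discCost, conn, Function.update_of_ne hj, Function.update_of_ne hk]

variable [Fintype A]

lemma sum_filter_disconnected_eq_sum_discCost (i : A) :
    ∑ j ∈ Finset.univ.filter (fun j => j ≠ i ∧ ¬ conn s i j), dc i j = ∑ j, discCost dc s i j :=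
  Finset.sum_filter _ _

lemma ct_eq (cc : A → Option F → ℝ) (i : A) :
    ct cc dc s i = cc i (s i) + ∑ j, discCost dc s i j := by
  rw [ct, sum_filter_disconnected_eq_sum_discCost]

lemma Phi0_eq (cc : A → Option F → ℝ) :
    Phi0 cc dc s = ∑ i, cc i (s i) + (1 / 2) * ∑ i, ∑ j, discCost dc s i j := by
  simp only [Phi0, sum_filter_disconnected_eq_sum_discCost]

end discCost

/-- By symmetry of `dc`, the deviator's row and column of the disconnection matrix change alike,
so the halved double sum changes by exactly the deviator's own disconnection cost change. -/
lemma Phi0_update_sub [Fintype A] [DecidableEq A] (cc : A → Option F → ℝ) (dc : A → A → ℝ)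
    (hsym : ∀ i j, dc i j = dc j i) (s : A → Option F) (i : A) (x : Option F) :
    Phi0 cc dc (Function.update s i x) - Phi0 cc dc s
      = ct cc dc (Function.update s i x) i - ct cc dc s i := by
  set s' := Function.update s i x
  have hcc : ∑ j, cc j (s' j) - ∑ j, cc j (s j) = cc i (s' i) - cc i (s i) := by
    rw [← Finset.sum_sub_distrib, Finset.sum_eq_single i (fun j _ hj => by
      simp [s', Function.update_of_ne hj]) (by simp)]
  have hdisc : ∑ j, ∑ k, discCost dc s' j k - ∑ j, ∑ k, discCost dc s j k
      = 2 * (∑ k, discCost dc s' i k - ∑ k, discCost dc s i k) := by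
    have h := sum_sum_eq_two_nsmul_sum_row (fun j k => discCost dc s' j k - discCost dc s j k)
      (fun j k => by rw [discCost_comm dc s' hsym, discCost_comm dc s hsym])
      i (by simp [discCost_self])
      (fun j k hj hk => by simp [s', discCost_update_of_ne dc s i x hj hk])
    simpa [Finset.sum_sub_distrib, nsmul_eq_mul] using h
  rw [Phi0_eq, Phi0_eq, ct_eq, ct_eq]
  linarith

theorem cost_le_cost_update_of_forall_potential_le {S : Type*} [DecidableEq A]
    (cost : (A → S) → A → ℝ) (Φ : (A → S) → ℝ)
    (hΦ : ∀ s i x, Φ (Function.update s i x) - Φ s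
      = cost (Function.update s i x) i - cost s i)
    {s : A → S} (hs : ∀ t, Φ s ≤ Φ t) (i : A) (x : S) :
    cost s i ≤ cost (Function.update s i x) i := by
  linarith [hs (Function.update s i x), hΦ s i x]

section Bounds

variable [Fintype A] (cc : A → Option F → ℝ) (dc : A → A → ℝ) (s : A → Option F)

lemma Phi0_le_soc (hdc : ∀ i j, 0 ≤ dc i j) : Phi0 cc dc s ≤ soc cc dc s := by
  have : 0 ≤ ∑ i, ∑ j ∈ Finset.univ.filter (fun j => j ≠ i ∧ ¬ conn s i j), dc i j :=
    Finset.sum_nonneg fun i _ => Finset.sum_nonneg fun j _ => hdc i j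
  unfold Phi0 soc
  linarith

lemma soc_le_two_mul_Phi0 (hcc : ∀ i o, 0 ≤ cc i o) : soc cc dc s ≤ 2 * Phi0 cc dc s := by
  have : 0 ≤ ∑ i, cc i (s i) := Finset.sum_nonneg fun i _ => hcc i (s i)
  unfold Phi0 soc
  linarith

end Bounds

theorem pos_le_two_general [Fintype A] [DecidableEq A]
    (cc : A → Option F → ℝ) (dc : A → A → ℝ)
    (hcc : ∀ i o, 0 ≤ cc i o)
    (hdc : ∀ i j, 0 ≤ dc i j) (hsym : ∀ i j, dc i j = dc j i)
    (shat : A → Option F) (hhat : ∀ s, Phi0 cc dc shat ≤ Phi0 cc dc s)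
    (sstar : A → Option F) :
    (∀ i s', ct cc dc shat i ≤ ct cc dc (Function.update shat i s') i) ∧
      soc cc dc shat ≤ 2 * soc cc dc sstar :=
  ⟨cost_le_cost_update_of_forall_potential_le (ct cc dc) (Phi0 cc dc)
      (Phi0_update_sub cc dc hsym) hhat,
    calc soc cc dc shat ≤ 2 * Phi0 cc dc shat := soc_le_two_mul_Phi0 cc dc shat hcc
      _ ≤ 2 * Phi0 cc dc sstar := by linarith [hhat sstar]
      _ ≤ 2 * soc cc dc sstar := by linarith [Phi0_le_soc cc dc sstar hdc]⟩

/-- any minimizer of the potential Φ̃ is a Nash equilibrium, and its social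
cost is at most twice the minimum social cost; hence the Price of Stability is at most 2. -/
theorem pos_le_two [Fintype A] [DecidableEq A]
    (cc : A → Option F → ℝ) (dc : A → A → ℝ)
    (hcc0 : ∀ i, cc i none = 0) (hcc : ∀ i o, 0 ≤ cc i o)
    (hdc : ∀ i j, 0 ≤ dc i j) (hsym : ∀ i j, dc i j = dc j i)
    (shat : A → Option F) (hhat : ∀ s, Phi0 cc dc shat ≤ Phi0 cc dc s)
    (sstar : A → Option F) (hstar : ∀ s, soc cc dc sstar ≤ soc cc dc s) :
    (∀ i s', ct cc dc shat i ≤ ct cc dc (Function.update shat i s') i) ∧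
      soc cc dc shat ≤ 2 * soc cc dc sstar :=
  pos_le_two_general cc dc hcc hdc hsym shat hhat sstar
end

section
/- The Price of Anarchy of the facility-choice game is unbounded: there is an instance (one facility f, two agents, cc(1,f)=cc(2,f)=0, dc(1,2)=1, zero facility cost) in which the assignment where both agents choose ∅ is a Nash equilibrium with social cost 2, while the optimum (both at f) has social cost 0. -/
open Finset
open scoped Classical

variable {A F : Type*}

/-- A Nash equilibrium: no agent can strictly decrease its own cost by deviating. -/
def IsNash [Fintype A] [DecidableEq A] (cc : A → Option F → ℝ) (dc : A → A → ℝ)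
    (s : A → Option F) : Prop :=
  ∀ i s', ct cc dc s i ≤ ct cc dc (Function.update s i s') i

/-! Everybody staying home disconnects every pair, and no agent can repair this alone: connecting
requires the partner to be at the same facility. So the all-`∅` assignment is an equilibrium of
positive cost, while everybody at `f` costs nothing. -/

theorem not_conn_of_right_eq_none {s : A → Option F} {i j : A} (hj : s j = none) :
    ¬ conn s i j := by
  rintro ⟨f, -, hf⟩
  simp [hj] at hf

theorem filter_not_conn_of_forall_ne_eq_none [Fintype A] {s : A → Option F} {i : A}
    (hs : ∀ j ≠ i, s j = none) :
    univ.filter (fun j => j ≠ i ∧ ¬ conn s i j) = univ.filter (· ≠ i) :=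
  filter_congr fun j _ =>
    and_iff_left_of_imp fun hj => not_conn_of_right_eq_none (hs j hj)

section

variable [Fintype A] (cc : A → Option F → ℝ) (dc : A → A → ℝ)

theorem ct_of_forall_ne_eq_none {s : A → Option F} {i : A} (hs : ∀ j ≠ i, s j = none) :
    ct cc dc s i = cc i (s i) + ∑ j ∈ univ.filter (· ≠ i), dc i j := by
  rw [ct, filter_not_conn_of_forall_ne_eq_none hs]

theorem isNash_const_none [DecidableEq A] (hcc : ∀ i x, cc i none ≤ cc i x) :
    IsNash cc dc (fun _ => none) := by
  intro i x
  have hothers : ∀ j ≠ i, Function.update (fun _ => none) i x j = none := fun j hj =>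
    Function.update_of_ne hj _ _
  rw [ct_of_forall_ne_eq_none cc dc fun j _ => rfl, ct_of_forall_ne_eq_none cc dc hothers,
    Function.update_self]
  exact add_le_add_left (hcc i x) _

theorem soc_const_none :
    soc cc dc (fun _ => (none : Option F)) =
      ∑ i, cc i none + ∑ i, ∑ j ∈ univ.filter (· ≠ i), dc i j := by
  simp only [soc, filter_not_conn_of_forall_ne_eq_none (s := fun _ => (none : Option F))
    fun _ _ => rfl]

theorem soc_const_some (f : F) :
    soc cc dc (fun _ => some f) = ∑ i, cc i (some f) := by
  have hconn : ∀ i j, conn (fun _ : A => some f) i j := fun _ _ => ⟨f, rfl, rfl⟩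
  simp [soc, hconn]

theorem soc_nonneg (hcc : ∀ i x, 0 ≤ cc i x) (hdc : ∀ i j, 0 ≤ dc i j) (s : A → Option F) :
    0 ≤ soc cc dc s :=
  add_nonneg (sum_nonneg fun i _ => hcc i _)
    (sum_nonneg fun i _ => sum_nonneg fun j _ => hdc i j)

end

/-- the Price of Anarchy is unbounded.  One facility, two agents with
zero connection costs and `dc(1,2)=1`: both agents choosing ∅ is a Nash equilibrium
of social cost 2, while the optimum (both at the facility) has social cost 0. -/
theorem poa_unbounded :
    let cc : Fin 2 → Option Unit → ℝ := fun _ _ => 0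
    let dc : Fin 2 → Fin 2 → ℝ := fun _ _ => 1
    let s0 : Fin 2 → Option Unit := fun _ => none
    let sf : Fin 2 → Option Unit := fun _ => some ()
    IsNash cc dc s0 ∧ soc cc dc s0 = 2 ∧ soc cc dc sf = 0 ∧
      (∀ s, soc cc dc sf ≤ soc cc dc s) := by
  intro cc dc s0 sf
  have hsf : soc cc dc sf = 0 := by simp [sf, soc_const_some, cc]
  refine ⟨isNash_const_none cc dc fun _ _ => le_rfl, ?_, hsf, fun s => ?_⟩
  · simp [s0, soc_const_none, cc, dc, Finset.filter_ne']
  · rw [hsf]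
    exact soc_nonneg cc dc (fun _ _ => le_rfl) (fun _ _ => zero_le_one) s
end

section
/- If a facility f_k cannot be budget-balanced at the optimum, a cheaper assignment exists: let s* be a social-cost-minimizing assignment, and suppose Σ_{i: s*_i = f_k} Q_i(s*) < c(f_k). Then the assignment ŝ obtained by moving every agent i with s*_i = f_k to nBR_i(s*) (with all other agents unchanged) satisfies c(ŝ) < c(s*), a contradiction; hence for every open facility f_k in s*, Σ_{i: s*_i = f_k} Q_i(s*) ≥ c(f_k). -/
open Finset
open scoped Classical

variable {A F : Type*}

/-- Total opening cost of the facilities open (used by some agent) in `s`. -/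
noncomputable def fcost [Fintype F] (fc : F → ℝ) (s : A → Option F) : ℝ :=
  ∑ f ∈ Finset.univ.filter (fun f => ∃ i, s i = some f), fc f

/-- The potential Φ with facility costs: total opening cost of open facilities plus Φ̃. -/
noncomputable def PhiC [Fintype A] [Fintype F] (fc : F → ℝ) (cc : A → Option F → ℝ)
    (dc : A → A → ℝ) (s : A → Option F) : ℝ :=
  fcost fc s + Phi0 cc dc s

/-- Total social cost: facility opening costs plus connection costs plus each
disconnected pair counted twice. -/
noncomputable def socC [Fintype A] [Fintype F] (fc : F → ℝ) (cc : A → Option F → ℝ)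
    (dc : A → A → ℝ) (s : A → Option F) : ℝ :=
  fcost fc s + soc cc dc s

/-!
Let `ŝ` move every agent of `fk` to its next-best response. Since these responses avoid `fk`
and use only facilities already open, `fk` closes and nothing opens: the facility cost drops
by at least `c(fk)`. An agent of `fk` is connected in `ŝ` to everyone it would be connected to
after moving alone, because the agents it joins stay put, so its cost is at most its solo
deviation cost; every other agent keeps all its connections. Hence
`c(ŝ) ≤ c(s*) - c(fk) + Σ Q_i`, and optimality of `s*` gives the bound.
-/

noncomputable def relocate (s : A → Option F) (fk : F) (g : A → Option F) : A → Option F :=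
  fun i => if s i = some fk then g i else s i

lemma fcost_add_le_of_open_subset [Fintype F] (fc : F → ℝ) (hfc : ∀ f, 0 ≤ fc f)
    (s t : A → Option F) (fk : F) (hfk : ∃ i, t i = some fk)
    (hsub : ∀ f, (∃ i, s i = some f) → f ≠ fk ∧ ∃ i, t i = some f) :
    fcost fc s + fc fk ≤ fcost fc t := by
  set openT := Finset.univ.filter (fun f => ∃ i, t i = some f)
  have hmem : fk ∈ openT := by simpa [openT] using hfk
  have hsub' : Finset.univ.filter (fun f => ∃ i, s i = some f) ⊆ openT.erase fk := by
    intro f hf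
    obtain ⟨hne, hopen⟩ := hsub f (by simpa using hf)
    simpa [openT, hne] using hopen
  calc fcost fc s + fc fk ≤ ∑ f ∈ openT.erase fk, fc f + fc fk := by
        gcongr
        exact Finset.sum_le_sum_of_subset_of_nonneg hsub' fun f _ _ => hfc f
    _ = fcost fc t := Finset.sum_erase_add _ _ hmem

lemma soc_eq_sum_ct [Fintype A] (cc : A → Option F → ℝ) (dc : A → A → ℝ)
    (s : A → Option F) : soc cc dc s = ∑ i, ct cc dc s i := by
  simp [soc, ct, Finset.sum_add_distrib]

lemma ct_le_of_eq_on_conn [Fintype A] (cc : A → Option F → ℝ) (dc : A → A → ℝ)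
    (hdc : ∀ i j, 0 ≤ dc i j) (s t : A → Option F) (i : A) (hi : s i = t i)
    (hconn : ∀ j, j ≠ i → conn t i j → s j = t j) :
    ct cc dc s i ≤ ct cc dc t i := by
  unfold ct
  rw [hi]
  refine add_le_add_right (Finset.sum_le_sum_of_subset_of_nonneg ?_ fun j _ _ => hdc i j) _
  intro j hj
  simp only [Finset.mem_filter, Finset.mem_univ, true_and] at hj ⊢
  refine ⟨hj.1, fun hc => hj.2 ?_⟩
  obtain ⟨f, hfi, hfj⟩ := hc
  exact ⟨f, hi ▸ hfi, hconn j hj.1 ⟨f, hfi, hfj⟩ ▸ hfj⟩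

section relocate

variable (s g : A → Option F) (fk : F)

lemma relocate_of_ne {i : A} (hi : s i ≠ some fk) : relocate s fk g i = s i := if_neg hi

lemma relocate_of_eq {i : A} (hi : s i = some fk) : relocate s fk g i = g i := if_pos hi

lemma ne_and_open_of_relocate_open (hg : ∀ i, s i = some fk → g i ≠ some fk)
    (hopen : ∀ i f, g i = some f → ∃ j, s j = some f) (f : F)
    (hf : ∃ i, relocate s fk g i = some f) : f ≠ fk ∧ ∃ j, s j = some f := by
  obtain ⟨i, hi⟩ := hf
  by_cases hfk : s i = some fk
  · rw [relocate_of_eq s g fk hfk] at hi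
    exact ⟨fun h => hg i hfk (h ▸ hi), hopen i f hi⟩
  · rw [relocate_of_ne s g fk hfk] at hi
    exact ⟨fun h => hfk (h ▸ hi), i, hi⟩

lemma ct_relocate_le_ct_update [Fintype A] [DecidableEq A] (cc : A → Option F → ℝ)
    (dc : A → A → ℝ) (hdc : ∀ i j, 0 ≤ dc i j) {i : A} (hi : s i = some fk)
    (hgi : g i ≠ some fk) :
    ct cc dc (relocate s fk g) i ≤ ct cc dc (Function.update s i (g i)) i := by
  refine ct_le_of_eq_on_conn cc dc hdc _ _ i
    (by rw [relocate_of_eq s g fk hi, Function.update_self]) ?_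
  rintro j hji ⟨f, hfi, hfj⟩
  rw [Function.update_self] at hfi
  rw [Function.update_of_ne hji] at hfj ⊢
  exact relocate_of_ne s g fk (by rwa [hfj, ← hfi])

lemma ct_relocate_le_ct [Fintype A] (cc : A → Option F → ℝ) (dc : A → A → ℝ)
    (hdc : ∀ i j, 0 ≤ dc i j) {i : A} (hi : s i ≠ some fk) :
    ct cc dc (relocate s fk g) i ≤ ct cc dc s i := by
  refine ct_le_of_eq_on_conn cc dc hdc _ _ i (relocate_of_ne s g fk hi) ?_
  rintro j - ⟨f, hfi, hfj⟩
  exact relocate_of_ne s g fk (hfj ▸ hfi ▸ hi)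

lemma soc_relocate_le [Fintype A] [DecidableEq A] (cc : A → Option F → ℝ) (dc : A → A → ℝ)
    (hdc : ∀ i j, 0 ≤ dc i j) (hg : ∀ i, s i = some fk → g i ≠ some fk) :
    soc cc dc (relocate s fk g) ≤ soc cc dc s +
      ∑ i ∈ Finset.univ.filter (fun i => s i = some fk),
        (ct cc dc (Function.update s i (g i)) i - ct cc dc s i) := by
  rw [soc_eq_sum_ct, soc_eq_sum_ct, Finset.sum_filter, ← Finset.sum_add_distrib]
  refine Finset.sum_le_sum fun i _ => ?_
  split_ifs with hi
  · linarith [ct_relocate_le_ct_update s g fk cc dc hdc hi (hg i hi)]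
  · linarith [ct_relocate_le_ct s g fk cc dc hdc hi]

end relocate

theorem optimum_budget_balanced_general [Fintype A] [Fintype F] [DecidableEq A]
    (fc : F → ℝ) (cc : A → Option F → ℝ) (dc : A → A → ℝ)
    (hfc : ∀ f, 0 ≤ fc f)
    (hdc : ∀ i j, 0 ≤ dc i j)
    (sstar : A → Option F)
    (hopt : ∀ s, socC fc cc dc sstar ≤ socC fc cc dc s)
    (nbr : A → Option F)
    (hne : ∀ i, nbr i ≠ sstar i)
    (hopen : ∀ i f, nbr i = some f → ∃ j, sstar j = some f) :
    ∀ fk : F, (∃ i, sstar i = some fk) →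
      fc fk ≤ ∑ i ∈ Finset.univ.filter (fun i => sstar i = some fk),
        (ct cc dc (Function.update sstar i (nbr i)) i - ct cc dc sstar i) := by
  intro fk hfk
  have hleave : ∀ i, sstar i = some fk → nbr i ≠ some fk := fun i hi => hi ▸ hne i
  have hfcost := fcost_add_le_of_open_subset fc hfc _ sstar fk hfk
    (ne_and_open_of_relocate_open sstar nbr fk hleave hopen)
  have hsoc := soc_relocate_le sstar nbr fk cc dc hdc hleave
  have hopt_relocate := hopt (relocate sstar fk nbr)
  unfold socC at hopt_relocate
  linarith

/-- at a social-cost-minimizing assignment `s*`, every open facility can be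
budget-balanced from the values `Q_i(s*)`: for every open facility `fk`,
`Σ_{i : s*_i = fk} Q_i(s*) ≥ c(fk)`.  (Otherwise moving all agents of `fk` to their
next-best responses would yield an assignment of strictly smaller social cost.) -/
theorem optimum_budget_balanced [Fintype A] [Fintype F] [DecidableEq A]
    (fc : F → ℝ) (cc : A → Option F → ℝ) (dc : A → A → ℝ)
    (hfc : ∀ f, 0 ≤ fc f) (hcc : ∀ i o, 0 ≤ cc i o)
    (hdc : ∀ i j, 0 ≤ dc i j) (hsym : ∀ i j, dc i j = dc j i)
    (sstar : A → Option F)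
    (hopt : ∀ s, socC fc cc dc sstar ≤ socC fc cc dc s)
    (nbr : A → Option F)
    (hne : ∀ i, nbr i ≠ sstar i)
    (hmin : ∀ i s', s' ≠ sstar i →
      ct cc dc (Function.update sstar i (nbr i)) i
        ≤ ct cc dc (Function.update sstar i s') i)
    (hopen : ∀ i f, nbr i = some f → ∃ j, sstar j = some f) :
    ∀ fk : F, (∃ i, sstar i = some fk) →
      fc fk ≤ ∑ i ∈ Finset.univ.filter (fun i => sstar i = some fk),
        (ct cc dc (Function.update sstar i (nbr i)) i - ct cc dc sstar i) :=
  optimum_budget_balanced_general fc cc dc hfc hdc sstar hopt nbr hne hopen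
end

section
/- Partition lemma for best responses: there exists a partition of the agents into sets A_1 and A_2 such that within each part, no two agents 'switch places': for all i, j in the same part with b_i ≠ b_j, it is not the case that both b_i = s*_j and b_j = s*_i. -/
/-!
Fix any linear order on the facilities and put in the first part exactly the agents whose
deviation moves them from a facility to a larger one. Two agents that switch places move
between the same two distinct facilities in opposite directions, so exactly one of them
moves up and they land in different parts.
-/

section
variable {A F : Type*} [LinearOrder F]

def MovesUp (sstar b : A → Option F) (i : A) : Prop :=
  ∃ f g, b i = some f ∧ sstar i = some g ∧ g < f

theorem movesUp_iff {sstar b : A → Option F} {i : A} {f g : F}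
    (hb : b i = some f) (hs : sstar i = some g) : MovesUp sstar b i ↔ g < f := by
  simp [MovesUp, hb, hs]

end

/-- partition lemma: given an assignment `s*` and a best-response
strategy `b i` for each agent, the agents can be partitioned into two sets (the set
where `P` holds and its complement) such that no two agents in the same part "switch
places": there are no `i, j` in the same part with `b i ≠ b j`, `b i = s*_j` and
`b j = s*_i` (equality of strategies meaning sharing an actual facility, per the
convention that two agents at ∅ are not together). -/
theorem switch_places_partition {A F : Type*} (sstar b : A → Option F) :
    ∃ P : A → Prop, ∀ i j : A, (P i ↔ P j) → b i ≠ b j →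
      ¬ ((∃ f, b i = some f ∧ sstar j = some f) ∧
         (∃ f, b j = some f ∧ sstar i = some f)) := by
  let : LinearOrder F := IsWellOrder.linearOrder WellOrderingRel
  refine ⟨MovesUp sstar b, ?_⟩
  rintro i j hiff hne ⟨⟨f, hbi, hsj⟩, ⟨g, hbj, hsi⟩⟩
  have hfg : f ≠ g := fun h => hne (by rw [hbi, hbj, h])
  rw [movesUp_iff hbi hsi, movesUp_iff hbj hsj] at hiff
  rcases hfg.lt_or_gt with h | h
  · exact lt_asymm h (hiff.mpr h)
  · exact lt_asymm h (hiff.mp h)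
end

section
/- Coalitional deviation lower bound: with the partition A_1, A_2 as in the switch-places lemma, let s^1 be the assignment where each agent i ∈ A_1 plays b_i and each agent in A_2 plays s*_i. Then Σ_{i ∈ A_1} c̃_i(b^i) ≥ CC(s^1, A_1) + DC(s^1, A_1, A_1) + DC(s^1, A_1, A_2), where b^i = (b_i, s*_{-i}), CC(s, S) = Σ_{i∈S} cc(i, s_i), and DC(s, S, T) = Σ_{unordered pairs (i,j), i∈S, j∈T, s_i ≠ s_j} dc(i,j). -/
/-!
Split the cost of each deviating agent `i ∈ A₁` in `bⁱ = (b i, s*₋ᵢ)` into its disconnection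
cost towards `A₁` and towards `A₂`. Towards `j ∈ A₂` the positions of `i` and `j` are the same
in `bⁱ` and in `s¹`, so that part matches exactly. For `i, j ∈ A₁` disconnected in `s¹`, the
no-switch-places condition forces them to be disconnected in `bⁱ` or in `bʲ`; by symmetry of
`dc` the `A₁`-part of `s¹` is therefore at most twice the `A₁`-part of the deviations.
-/

open Finset
open scoped Classical

variable {A F : Type*}

lemma conn_congr {s t : A → Option F} {i j : A} (hi : s i = t i) (hj : s j = t j) :
    conn s i j ↔ conn t i j := by
  simp only [conn, hi, hj]

-- `hfree` is the no-switch-places condition for the pair `(i, j)` deviating to `(x, y)`.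
lemma not_conn_update_or_not_conn_update [DecidableEq A] {t : A → Option F} {i j : A}
    {x y : Option F} (hij : i ≠ j)
    (hfree : x ≠ y →
      ¬ ((∃ f, x = some f ∧ t j = some f) ∧ (∃ f, y = some f ∧ t i = some f)))
    (hxy : ¬ ∃ f, x = some f ∧ y = some f) :
    ¬ conn (Function.update t i x) i j ∨ ¬ conn (Function.update t j y) j i := by
  simp only [conn, Function.update_self, Function.update_of_ne hij, Function.update_of_ne hij.symm]
  by_cases hxy' : x = y
  · subst hxy'
    exact Or.inl fun ⟨f, hf, _⟩ => hxy ⟨f, hf, hf⟩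
  · exact not_and_or.mp (hfree hxy')

lemma sum_sum_filter_le_two_mul_of_or {ι : Type*} (S : Finset ι) (w : ι → ι → ℝ)
    (hw : ∀ i j, 0 ≤ w i j) (hsym : ∀ i j, w i j = w j i)
    (P Q : ι → ι → Prop) [∀ i, DecidablePred (P i)] [∀ i, DecidablePred (Q i)]
    (hPQ : ∀ i ∈ S, ∀ j ∈ S, P i j → Q i j ∨ Q j i) :
    ∑ i ∈ S, ∑ j ∈ S with P i j, w i j ≤ 2 * ∑ i ∈ S, ∑ j ∈ S with Q i j, w i j := by
  have hpoint : ∀ i ∈ S, ∀ j ∈ S, (if P i j then w i j else 0)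
      ≤ (if Q i j then w i j else 0) + (if Q j i then w j i else 0) := by
    intro i hi j hj
    rw [hsym j i]
    by_cases hp : P i j
    · rcases hPQ i hi j hj hp with hq | hq <;> simp only [hp, hq, if_true] <;>
        split_ifs <;> linarith [hw i j]
    · simp only [hp, if_false]
      split_ifs <;> linarith [hw i j]
  simp only [sum_filter]
  calc ∑ i ∈ S, ∑ j ∈ S, (if P i j then w i j else 0)
      ≤ ∑ i ∈ S, ∑ j ∈ S, ((if Q i j then w i j else 0) + (if Q j i then w j i else 0)) :=
        sum_le_sum fun i hi => sum_le_sum fun j hj => hpoint i hi j hj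
    _ = 2 * ∑ i ∈ S, ∑ j ∈ S, (if Q i j then w i j else 0) := by
        rw [sum_congr rfl fun i _ => sum_add_distrib, sum_add_distrib,
          sum_comm (s := S) (f := fun i j => if Q j i then w j i else 0), two_mul]

lemma ct_eq_add_sum_add_sum [Fintype A] [DecidableEq A] (cc : A → Option F → ℝ)
    (dc : A → A → ℝ) (s : A → Option F) (i : A) {S T : Finset A} (hcover : S ∪ T = univ)
    (hdisj : Disjoint S T) :
    ct cc dc s i = cc i (s i) + ∑ j ∈ S with j ≠ i ∧ ¬ conn s i j, dc i j
      + ∑ j ∈ T with j ≠ i ∧ ¬ conn s i j, dc i j := by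
  rw [ct, add_assoc, ← sum_union (disjoint_filter_filter hdisj), ← filter_union, hcover]
  congr!

theorem coalition_deviation_lower_bound_general [Fintype A] [DecidableEq A]
    (cc : A → Option F → ℝ) (dc : A → A → ℝ)
    (hdc : ∀ i j, 0 ≤ dc i j)
    (hsym : ∀ i j, dc i j = dc j i)
    (sstar b : A → Option F) (A1 A2 : Finset A)
    (hcover : A1 ∪ A2 = Finset.univ) (hdisj : Disjoint A1 A2)
    (hfree : ∀ i ∈ A1, ∀ j ∈ A1, b i ≠ b j →
      ¬ ((∃ f, b i = some f ∧ sstar j = some f) ∧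
         (∃ f, b j = some f ∧ sstar i = some f))) :
    let s1 : A → Option F := fun i => if i ∈ A1 then b i else sstar i
    (∑ i ∈ A1, cc i (s1 i))
      + (1 / 2) * (∑ i ∈ A1, ∑ j ∈ A1.filter (fun j => j ≠ i ∧ ¬ conn s1 i j), dc i j)
      + (∑ i ∈ A1, ∑ j ∈ A2.filter (fun j => ¬ conn s1 i j), dc i j)
    ≤ ∑ i ∈ A1, ct cc dc (Function.update sstar i (b i)) i := by
  intro s1
  set bi : A → A → Option F := fun i => Function.update sstar i (b i)
  have hnotA1 : ∀ j ∈ A2, j ∉ A1 := fun j hj hj1 => disjoint_left.mp hdisj hj1 hj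
  have hs1 : ∀ i ∈ A1, s1 i = b i := fun i hi => if_pos hi
  have hcc_eq : ∀ i ∈ A1, cc i (s1 i) = cc i (bi i i) := fun i hi => by
    simp only [bi, hs1 i hi, Function.update_self]
  have hA2conn : ∀ i ∈ A1, ∑ j ∈ A2 with ¬ conn s1 i j, dc i j
      = ∑ j ∈ A2 with j ≠ i ∧ ¬ conn (bi i) i j, dc i j := fun i hi => by
    refine sum_congr (filter_congr fun j hj => ?_) fun _ _ => rfl
    have hji : j ≠ i := fun h => hnotA1 j hj (h ▸ hi)
    simp only [ne_eq, hji, not_false_eq_true, true_and]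
    exact not_congr (conn_congr (by simp [bi, hs1 i hi]) (by simp [bi, hji, s1, hnotA1 j hj]))
  have hA1conn : ∑ i ∈ A1, ∑ j ∈ A1 with j ≠ i ∧ ¬ conn s1 i j, dc i j
      ≤ 2 * ∑ i ∈ A1, ∑ j ∈ A1 with j ≠ i ∧ ¬ conn (bi i) i j, dc i j := by
    refine sum_sum_filter_le_two_mul_of_or A1 dc hdc hsym _ _ fun i hi j hj ⟨hji, hnc⟩ => ?_
    have := not_conn_update_or_not_conn_update (t := sstar) hji.symm (hfree i hi j hj)
      (by simpa [conn, s1, hi, hj] using hnc)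
    exact this.imp (fun h => ⟨hji, h⟩) (fun h => ⟨hji.symm, h⟩)
  simp only [ct_eq_add_sum_add_sum cc dc _ _ hcover hdisj, sum_add_distrib]
  rw [sum_congr rfl hcc_eq, sum_congr rfl hA2conn]
  linarith

/-- coalitional deviation lower bound: let `A_1, A_2` partition the agents
with no two agents of `A_1` switching places, and let `s^1` be the assignment where every
agent of `A_1` plays its best response `b i` and every agent of `A_2` stays at `s*`.
Then `Σ_{i ∈ A_1} c̃_i(b^i) ≥ CC(s^1,A_1) + DC(s^1,A_1,A_1) + DC(s^1,A_1,A_2)`,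
where `DC(s,S,T)` sums `dc(i,j)` over unordered disconnected pairs with one endpoint in
each set (so `DC(s,A_1,A_1)` is half of the corresponding double sum). -/
theorem coalition_deviation_lower_bound [Fintype A] [DecidableEq A]
    (cc : A → Option F → ℝ) (dc : A → A → ℝ)
    (hcc : ∀ i o, 0 ≤ cc i o) (hdc : ∀ i j, 0 ≤ dc i j)
    (hsym : ∀ i j, dc i j = dc j i)
    (sstar b : A → Option F) (A1 A2 : Finset A)
    (hcover : A1 ∪ A2 = Finset.univ) (hdisj : Disjoint A1 A2)
    (hfree : ∀ i ∈ A1, ∀ j ∈ A1, b i ≠ b j →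
      ¬ ((∃ f, b i = some f ∧ sstar j = some f) ∧
         (∃ f, b j = some f ∧ sstar i = some f))) :
    let s1 : A → Option F := fun i => if i ∈ A1 then b i else sstar i
    (∑ i ∈ A1, cc i (s1 i))
      + (1 / 2) * (∑ i ∈ A1, ∑ j ∈ A1.filter (fun j => j ≠ i ∧ ¬ conn s1 i j), dc i j)
      + (∑ i ∈ A1, ∑ j ∈ A2.filter (fun j => ¬ conn s1 i j), dc i j)
    ≤ ∑ i ∈ A1, ct cc dc (Function.update sstar i (b i)) i :=
  coalition_deviation_lower_bound_general cc dc hdc hsym sstar b A1 A2 hcover hdisj hfree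
end

section
/- Linear bound on the rounding failure probability: for every integer m ≥ 1 and every x ∈ [1/2, 1], ((m − (1 − x))/m)^m ≤ 2(1 − 1/√e)·x + (2/√e − 1), and moreover the right-hand side is at most (2/√e)·x on [1/2, 1]. -/
/-!
The map `x ↦ ((m - 1 + x) / m) ^ m` is convex, so on `[1/2, 1]` it lies below its chord. At
`x = 1` it equals `1`, and at `x = 1/2` it is `(1 - 1/(2m)) ^ m ≤ e^{-1/2}`. The chord through
`(1/2, 1/√e)` and `(1, 1)` is the stated affine function, and it is below `(2/√e) x` on `[1/2, 1]`
because `1/√e ≥ 1/2`.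
-/

open Real

lemma one_div_sqrt_exp_one : 1 / √(exp 1) = exp (-(1 / 2)) := by
  rw [← exp_half, one_div, ← exp_neg]

lemma half_le_one_div_sqrt_exp_one : 1 / 2 ≤ 1 / √(exp 1) := by
  rw [one_div_sqrt_exp_one]
  linarith [add_one_le_exp (-(1 / 2 : ℝ))]

lemma one_sub_half_div_pow_le {m : ℕ} (hm : 1 ≤ m) :
    (1 - 1 / 2 / (m : ℝ)) ^ m ≤ 1 / √(exp 1) := by
  rw [one_div_sqrt_exp_one]
  have : (1 : ℝ) ≤ m := by exact_mod_cast hm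
  exact one_sub_div_pow_le_exp_neg (by linarith)

lemma mul_add_one_sub_pow_le (n : ℕ) {a t : ℝ} (ha : 0 ≤ a) (ht₀ : 0 ≤ t) (ht₁ : t ≤ 1) :
    (t * a + (1 - t)) ^ n ≤ t * a ^ n + (1 - t) := by
  simpa using (convexOn_pow n).2 (Set.mem_Ici.2 ha) (Set.mem_Ici.2 zero_le_one) ht₀
    (sub_nonneg.2 ht₁) (add_sub_cancel t 1)

/-- for every integer `m ≥ 1` and `x ∈ [1/2, 1]`,
`((m − (1 − x))/m)^m ≤ 2(1 − 1/√e)·x + (2/√e − 1)`, and moreover this affine bound is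
at most `(2/√e)·x` on `[1/2, 1]`. -/
theorem chord_bound (m : ℕ) (hm : 1 ≤ m) (x : ℝ) (hx : x ∈ Set.Icc (1 / 2 : ℝ) 1) :
    (((m : ℝ) - (1 - x)) / m) ^ m
        ≤ 2 * (1 - 1 / Real.sqrt (Real.exp 1)) * x + (2 / Real.sqrt (Real.exp 1) - 1) ∧
      2 * (1 - 1 / Real.sqrt (Real.exp 1)) * x + (2 / Real.sqrt (Real.exp 1) - 1)
        ≤ (2 / Real.sqrt (Real.exp 1)) * x := by
  obtain ⟨hx₁, hx₂⟩ := hx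
  have hm₁ : (1 : ℝ) ≤ m := by exact_mod_cast hm
  have h_two_div : 2 / √(exp 1) = 2 * (1 / √(exp 1)) := by ring
  set s := 1 / √(exp 1)
  set a := 1 - 1 / 2 / (m : ℝ)
  have ha : 0 ≤ a := by
    rw [sub_nonneg, div_le_one (by linarith)]
    linarith
  have h_comb : ((m : ℝ) - (1 - x)) / m = (2 - 2 * x) * a + (1 - (2 - 2 * x)) := by
    simp only [a]; field_simp; ring
  rw [h_two_div]
  constructor
  · calc (((m : ℝ) - (1 - x)) / m) ^ m
        = ((2 - 2 * x) * a + (1 - (2 - 2 * x))) ^ m := by rw [h_comb]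
      _ ≤ (2 - 2 * x) * a ^ m + (1 - (2 - 2 * x)) :=
          mul_add_one_sub_pow_le m ha (by linarith) (by linarith)
      _ ≤ (2 - 2 * x) * s + (1 - (2 - 2 * x)) := by
          gcongr
          · linarith
          · exact one_sub_half_div_pow_le hm
      _ = 2 * (1 - s) * x + (2 * s - 1) := by ring
  · have hs : 1 / 2 ≤ s := half_le_one_div_sqrt_exp_one
    -- the gap is `(2x - 1)(2s - 1)`
    linarith [mul_nonneg (by linarith : 0 ≤ 2 * x - 1) (by linarith : 0 ≤ 2 * s - 1)]
end

section
/- Correctness of the threshold rounding (Algorithm 1): given any feasible fractional solution (x*_{ik}, x*_{ij}, x*_{ijk}, x*_k) of the LP relaxation, the rounded solution x̂ defined by x̂_{ik} = 1 iff x*_{ik} ≥ 1/(m+1), x̂_{ijk} = min(x̂_{ik}, x̂_{jk}), x̂_{ij} = max(0, 1 − Σ_k x̂_{ijk}), x̂_k = max_i x̂_{ik}, is a feasible integral solution, and every rounded variable satisfies x̂ ≤ (m+1)·x*. Consequently the objective value of x̂ is at most (m+1) times that of x*. -/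
/-!
Every rounded variable is 0 or 1 and exceeds its fractional counterpart by at most the factor
`m + 1` because the threshold is `1/(m+1)`. The only nontrivial case is `x̂_{ij} = 1`: then every
`x̂_{ijk}` vanishes, so for each of the `m` facilities one of `x*_{ik}, x*_{jk}` — and hence
`x*_{ijk}` — is below `1/(m+1)`; the covering constraint `1 - x*_{ij} ≤ Σ_k x*_{ijk} < m/(m+1)`
then forces `x*_{ij} > 1/(m+1)`.
-/

open Finset
open scoped Classical

/-- Threshold rounding of the fractional `x_{ik}`: round up to 1 iff `x_{ik} ≥ 1/(m+1)`. -/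
noncomputable def roundX {A K : Type*} (m : ℕ) (x : A → K → ℝ) (i : A) (k : K) : ℝ :=
  if (1 : ℝ) / (m + 1) ≤ x i k then 1 else 0

/-- Rounded `x_{ijk} = min(x̂_{ik}, x̂_{jk})`. -/
noncomputable def roundZ {A K : Type*} (m : ℕ) (x : A → K → ℝ) (i j : A) (k : K) : ℝ :=
  min (roundX m x i k) (roundX m x j k)

/-- Rounded `x_{ij} = max(0, 1 − Σ_k x̂_{ijk})`. -/
noncomputable def roundY {A K : Type*} [Fintype K] (m : ℕ) (x : A → K → ℝ) (i j : A) : ℝ :=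
  max 0 (1 - ∑ k, roundZ m x i j k)

/-- Rounded `x_k = max_i x̂_{ik}` (equal to 1 iff some `x̂_{ik} = 1`). -/
noncomputable def roundU {A K : Type*} (m : ℕ) (x : A → K → ℝ) (k : K) : ℝ :=
  if ∃ i, (1 : ℝ) / (m + 1) ≤ x i k then 1 else 0

section Rounding

variable {A K : Type*} {m : ℕ} {x : A → K → ℝ}

lemma roundX_eq_zero_or_one (i : A) (k : K) : roundX m x i k = 0 ∨ roundX m x i k = 1 := by
  unfold roundX; split_ifs <;> simp

lemma roundX_nonneg (i : A) (k : K) : 0 ≤ roundX m x i k := by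
  rcases roundX_eq_zero_or_one (m := m) (x := x) i k with h | h <;> simp [h]

lemma roundX_le_mul {i : A} {k : K} (hx : 0 ≤ x i k) : roundX m x i k ≤ (m + 1) * x i k := by
  unfold roundX
  split_ifs with h
  · rwa [div_le_iff₀' (by positivity)] at h
  · positivity

lemma roundZ_le_left (i j : A) (k : K) : roundZ m x i j k ≤ roundX m x i k := min_le_left _ _

lemma roundZ_le_right (i j : A) (k : K) : roundZ m x i j k ≤ roundX m x j k := min_le_right _ _

lemma roundZ_eq_zero_or_one (i j : A) (k : K) : roundZ m x i j k = 0 ∨ roundZ m x i j k = 1 := by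
  unfold roundZ
  rcases roundX_eq_zero_or_one (m := m) (x := x) i k with h | h <;>
    rcases roundX_eq_zero_or_one (m := m) (x := x) j k with h' | h' <;> simp [h, h']

lemma roundZ_nonneg (i j : A) (k : K) : 0 ≤ roundZ m x i j k :=
  le_min (roundX_nonneg i k) (roundX_nonneg j k)

lemma lt_of_roundZ_eq_zero {i j : A} {k : K} {v : ℝ} (hi : v ≤ x i k) (hj : v ≤ x j k)
    (h : roundZ m x i j k = 0) : v < 1 / (m + 1) := by
  unfold roundZ roundX at h
  split_ifs at h <;> first | linarith | norm_num at h

variable [Fintype K]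

lemma one_sub_roundY_le (i j : A) : 1 - roundY m x i j ≤ ∑ k, roundZ m x i j k := by
  have : 1 - ∑ k, roundZ m x i j k ≤ roundY m x i j := le_max_right _ _
  linarith

lemma roundY_eq_zero_of_roundZ_eq_one {i j : A} {k : K} (h : roundZ m x i j k = 1) :
    roundY m x i j = 0 := by
  have : 1 ≤ ∑ k, roundZ m x i j k :=
    h ▸ single_le_sum (fun k _ => roundZ_nonneg i j k) (mem_univ k)
  exact max_eq_left (by linarith)

lemma roundY_eq_zero_or_one (i j : A) : roundY m x i j = 0 ∨ roundY m x i j = 1 := by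
  by_cases h : ∃ k, roundZ m x i j k = 1
  · obtain ⟨k, hk⟩ := h
    exact Or.inl (roundY_eq_zero_of_roundZ_eq_one hk)
  · have hz : ∀ k, roundZ m x i j k = 0 := fun k =>
      (roundZ_eq_zero_or_one i j k).resolve_right fun hk => h ⟨k, hk⟩
    right
    simp [roundY, hz]

lemma roundZ_eq_zero_of_roundY_eq_one {i j : A} (h : roundY m x i j = 1) (k : K) :
    roundZ m x i j k = 0 :=
  (roundZ_eq_zero_or_one i j k).resolve_right fun hk => by
    simp [roundY_eq_zero_of_roundZ_eq_one hk] at h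

lemma roundY_le_mul {i j : A} {y : ℝ} {z : K → ℝ} (hm : Fintype.card K = m)
    (hzi : ∀ k, z k ≤ x i k) (hzj : ∀ k, z k ≤ x j k) (hcover : 1 - y ≤ ∑ k, z k)
    (hy : 0 ≤ y) : roundY m x i j ≤ (m + 1) * y := by
  rcases roundY_eq_zero_or_one (m := m) (x := x) i j with h | h
  · rw [h]; positivity
  have hz : ∀ k, z k ≤ 1 / (m + 1) := fun k =>
    (lt_of_roundZ_eq_zero (hzi k) (hzj k) (roundZ_eq_zero_of_roundY_eq_one h k)).le
  have hsum : ∑ k, z k ≤ m * (1 / (m + 1)) := by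
    simpa [hm] using sum_le_sum fun k (_ : k ∈ univ) => hz k
  have hm1 : (m + 1 : ℝ) * (1 / (m + 1)) = 1 := by field_simp
  rw [h]
  nlinarith

omit [Fintype K]

lemma roundX_le_roundU (i : A) (k : K) : roundX m x i k ≤ roundU m x k := by
  unfold roundX roundU
  split_ifs with hi hU
  · rfl
  · exact absurd ⟨i, hi⟩ hU
  all_goals norm_num

lemma roundU_eq_zero_or_one (k : K) : roundU m x k = 0 ∨ roundU m x k = 1 := by
  unfold roundU; split_ifs <;> simp

lemma roundU_le_mul {u : K → ℝ} {k : K} (hxu : ∀ i, x i k ≤ u k) (hu : 0 ≤ u k) :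
    roundU m x k ≤ (m + 1) * u k := by
  unfold roundU
  split_ifs with h
  · obtain ⟨i, hi⟩ := h
    rw [div_le_iff₀' (by positivity)] at hi
    nlinarith [hxu i]
  · positivity

end Rounding

lemma sum_mul_le_mul_sum {ι : Type*} {s : Finset ι} {w f g : ι → ℝ} {r : ℝ}
    (hw : ∀ i ∈ s, 0 ≤ w i) (hfg : ∀ i ∈ s, f i ≤ r * g i) :
    ∑ i ∈ s, w i * f i ≤ r * ∑ i ∈ s, w i * g i := by
  rw [mul_sum]
  exact sum_le_sum fun i hi =>
    (mul_le_mul_of_nonneg_left (hfg i hi) (hw i hi)).trans_eq (mul_left_comm _ _ _)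

lemma sum_sum_mul_le_mul_sum_sum {ι κ : Type*} {s : Finset ι} {t : ι → Finset κ}
    {w f g : ι → κ → ℝ} {r : ℝ} (hw : ∀ i ∈ s, ∀ k ∈ t i, 0 ≤ w i k)
    (hfg : ∀ i ∈ s, ∀ k ∈ t i, f i k ≤ r * g i k) :
    ∑ i ∈ s, ∑ k ∈ t i, w i k * f i k ≤ r * ∑ i ∈ s, ∑ k ∈ t i, w i k * g i k := by
  rw [mul_sum]
  exact sum_le_sum fun i hi => sum_mul_le_mul_sum (hw i hi) (hfg i hi)

theorem threshold_rounding_general {A K : Type*} [Fintype A] [Fintype K]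
    (m : ℕ) (hm : Fintype.card K = m)
    (w : A → K → ℝ) (d : A → A → ℝ) (c : K → ℝ)
    (hw : ∀ i k, 0 ≤ w i k) (hd : ∀ i j, 0 ≤ d i j)
    (hc : ∀ k, 0 ≤ c k)
    (x : A → K → ℝ) (y : A → A → ℝ) (z : A → A → K → ℝ) (u : K → ℝ)
    (h1 : ∀ i j k, z i j k ≤ x i k) (h2 : ∀ i j k, z i j k ≤ x j k)
    (h3 : ∀ i j, 1 - y i j ≤ ∑ k, z i j k)
    (h4 : ∀ i k, x i k ≤ u k)
    (hx01 : ∀ i k, x i k ∈ Set.Icc (0 : ℝ) 1)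
    (hy01 : ∀ i j, y i j ∈ Set.Icc (0 : ℝ) 1)
    (hu01 : ∀ k, u k ∈ Set.Icc (0 : ℝ) 1) :
    (∀ i j k, roundZ m x i j k ≤ roundX m x i k ∧ roundZ m x i j k ≤ roundX m x j k) ∧
    (∀ i j, 1 - roundY m x i j ≤ ∑ k, roundZ m x i j k) ∧
    (∀ i k, roundX m x i k ≤ roundU m x k) ∧
    (∀ i k, roundX m x i k = 0 ∨ roundX m x i k = 1) ∧
    (∀ i j k, roundZ m x i j k = 0 ∨ roundZ m x i j k = 1) ∧
    (∀ i j, roundY m x i j = 0 ∨ roundY m x i j = 1) ∧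
    (∀ k, roundU m x k = 0 ∨ roundU m x k = 1) ∧
    (∀ i k, roundX m x i k ≤ (m + 1) * x i k) ∧
    (∀ i j, roundY m x i j ≤ (m + 1) * y i j) ∧
    (∀ k, roundU m x k ≤ (m + 1) * u k) ∧
    ((∑ i, ∑ k, w i k * roundX m x i k)
        + (∑ i, ∑ j ∈ Finset.univ.filter (fun j => j ≠ i), d i j * roundY m x i j)
        + (∑ k, c k * roundU m x k)
      ≤ (m + 1) * ((∑ i, ∑ k, w i k * x i k)
        + (∑ i, ∑ j ∈ Finset.univ.filter (fun j => j ≠ i), d i j * y i j)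
        + (∑ k, c k * u k))) := by
  have hX i k : roundX m x i k ≤ (m + 1) * x i k := roundX_le_mul (hx01 i k).1
  have hY i j : roundY m x i j ≤ (m + 1) * y i j :=
    roundY_le_mul hm (h1 i j) (h2 i j) (h3 i j) (hy01 i j).1
  have hU k : roundU m x k ≤ (m + 1) * u k := roundU_le_mul (fun i => h4 i k) (hu01 k).1
  refine ⟨fun i j k => ⟨roundZ_le_left i j k, roundZ_le_right i j k⟩, one_sub_roundY_le,
    roundX_le_roundU, roundX_eq_zero_or_one, roundZ_eq_zero_or_one, roundY_eq_zero_or_one,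
    roundU_eq_zero_or_one, hX, hY, hU, ?_⟩
  rw [mul_add, mul_add]
  gcongr ?_ + ?_ + ?_
  · exact sum_sum_mul_le_mul_sum_sum (fun i _ k _ => hw i k) (fun i _ k _ => hX i k)
  · exact sum_sum_mul_le_mul_sum_sum (fun i _ j _ => hd i j) (fun i _ j _ => hY i j)
  · exact sum_mul_le_mul_sum (fun k _ => hc k) (fun k _ => hU k)

/-- correctness of the threshold rounding, Algorithm 1: from any feasible
fractional LP solution `(x, y, z, u)` (with `m` facilities), the rounded solution is a
feasible integral solution, every rounded variable is at most `(m+1)` times the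
corresponding fractional one, and hence the objective value of the rounded solution is
at most `(m+1)` times the fractional objective value. -/
theorem threshold_rounding {A K : Type*} [Fintype A] [Fintype K]
    (m : ℕ) (hm : Fintype.card K = m)
    (w : A → K → ℝ) (d : A → A → ℝ) (c : K → ℝ)
    (hw : ∀ i k, 0 ≤ w i k) (hd : ∀ i j, 0 ≤ d i j)
    (hds : ∀ i j, d i j = d j i) (hc : ∀ k, 0 ≤ c k)
    (x : A → K → ℝ) (y : A → A → ℝ) (z : A → A → K → ℝ) (u : K → ℝ)
    (hys : ∀ i j, y i j = y j i) (hzs : ∀ i j k, z i j k = z j i k)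
    (h1 : ∀ i j k, z i j k ≤ x i k) (h2 : ∀ i j k, z i j k ≤ x j k)
    (h3 : ∀ i j, 1 - y i j ≤ ∑ k, z i j k)
    (h4 : ∀ i k, x i k ≤ u k)
    (hx01 : ∀ i k, x i k ∈ Set.Icc (0 : ℝ) 1)
    (hy01 : ∀ i j, y i j ∈ Set.Icc (0 : ℝ) 1)
    (hz01 : ∀ i j k, z i j k ∈ Set.Icc (0 : ℝ) 1)
    (hu01 : ∀ k, u k ∈ Set.Icc (0 : ℝ) 1) :
    (∀ i j k, roundZ m x i j k ≤ roundX m x i k ∧ roundZ m x i j k ≤ roundX m x j k) ∧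
    (∀ i j, 1 - roundY m x i j ≤ ∑ k, roundZ m x i j k) ∧
    (∀ i k, roundX m x i k ≤ roundU m x k) ∧
    (∀ i k, roundX m x i k = 0 ∨ roundX m x i k = 1) ∧
    (∀ i j k, roundZ m x i j k = 0 ∨ roundZ m x i j k = 1) ∧
    (∀ i j, roundY m x i j = 0 ∨ roundY m x i j = 1) ∧
    (∀ k, roundU m x k = 0 ∨ roundU m x k = 1) ∧
    (∀ i k, roundX m x i k ≤ (m + 1) * x i k) ∧
    (∀ i j, roundY m x i j ≤ (m + 1) * y i j) ∧
    (∀ k, roundU m x k ≤ (m + 1) * u k) ∧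
    ((∑ i, ∑ k, w i k * roundX m x i k)
        + (∑ i, ∑ j ∈ Finset.univ.filter (fun j => j ≠ i), d i j * roundY m x i j)
        + (∑ k, c k * roundU m x k)
      ≤ (m + 1) * ((∑ i, ∑ k, w i k * x i k)
        + (∑ i, ∑ j ∈ Finset.univ.filter (fun j => j ≠ i), d i j * y i j)
        + (∑ k, c k * u k))) :=
  threshold_rounding_general m hm w d c hw hd hc x y z u h1 h2 h3 h4 hx01 hy01 hu01
end
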